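/- Let V be a nonempty countable set and b : P(V) → [0,∞] satisfy conditions (0), (1) symmetry, (2) submodularity, (3') b(lim X_n) ≤ liminf b(X_n) for ⊆-monotone sequences, and (4) finiteness of λ_b. Then for any u ≠ v ∈ V, the intersection and the union of any nonempty (possibly infinite) family of optimal u-v cuts is again an optimal u-v cut. -/
import Mathlib


open Set Filter Topology ENNReal

noncomputable section

/-- `λ_b(u,v)`: the infimum of `b(X)` over all `u-v` cuts `X`
(sets with `u ∈ X` and `v ∉ X`). -/
def lamB {V : Type*} (b : Set V → ℝ≥0∞) (u v : V) : ℝ≥0∞ :=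
  ⨅ (X : Set V) (_ : u ∈ X ∧ v ∉ X), b X

/-- `X` is an optimal `u-v` cut: a `u-v` cut with `b(X) = λ_b(u,v)`. -/
def IsOptCut {V : Type*} (b : Set V → ℝ≥0∞) (u v : V) (X : Set V) : Prop :=
  u ∈ X ∧ v ∉ X ∧ b X = lamB b u v

lemma lamB_le' {V : Type*} (b : Set V → ℝ≥0∞) {u v : V} {X : Set V}
    (h : u ∈ X ∧ v ∉ X) : lamB b u v ≤ b X :=
  iInf_le_of_le X (iInf_le _ h)

lemma optPair {V : Type*} {b : Set V → ℝ≥0∞} {u v : V}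
    (h2 : ∀ X Y : Set V, b (X ∩ Y) + b (X ∪ Y) ≤ b X + b Y)
    (hlam : lamB b u v ≠ ⊤) {X Y : Set V}
    (hX : IsOptCut b u v X) (hY : IsOptCut b u v Y) :
    IsOptCut b u v (X ∩ Y) ∧ IsOptCut b u v (X ∪ Y) := by
  set L := lamB b u v with hL
  have hcutI : u ∈ X ∩ Y ∧ v ∉ X ∩ Y :=
    ⟨⟨hX.1, hY.1⟩, fun h => hX.2.1 h.1⟩
  have hcutU : u ∈ X ∪ Y ∧ v ∉ X ∪ Y :=
    ⟨Or.inl hX.1, fun h => h.elim hX.2.1 hY.2.1⟩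
  have hiL : L ≤ b (X ∩ Y) := lamB_le' b hcutI
  have huL : L ≤ b (X ∪ Y) := lamB_le' b hcutU
  have hsum : b (X ∩ Y) + b (X ∪ Y) = L + L := by
    refine le_antisymm ?_ (add_le_add hiL huL)
    calc b (X ∩ Y) + b (X ∪ Y) ≤ b X + b Y := h2 X Y
      _ = L + L := by rw [hX.2.2, hY.2.2]
  have hI : b (X ∩ Y) = L := by
    by_contra h
    have hlt : L < b (X ∩ Y) := lt_of_le_of_ne hiL (Ne.symm h)
    have : L + L < L + L := by
      calc L + L < b (X ∩ Y) + L := by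
            exact ENNReal.add_lt_add_right hlam hlt
        _ ≤ b (X ∩ Y) + b (X ∪ Y) := add_le_add le_rfl huL
        _ = L + L := hsum
    exact lt_irrefl _ this
  have hU : b (X ∪ Y) = L := by
    have := hsum
    rw [hI] at this
    exact (ENNReal.add_right_inj hlam).mp this
  exact ⟨⟨hcutI.1, hcutI.2, hI⟩, ⟨hcutU.1, hcutU.2, hU⟩⟩

/-- iterated intersections of a sequence of sets -/
def interSeq {V : Type*} (Z : ℕ → Set V) : ℕ → Set V
  | 0 => Z 0
  | n + 1 => interSeq Z n ∩ Z (n + 1)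

/-- iterated unions of a sequence of sets -/
def unionSeq {V : Type*} (Z : ℕ → Set V) : ℕ → Set V
  | 0 => Z 0
  | n + 1 => unionSeq Z n ∪ Z (n + 1)

lemma interSeq_subset {V : Type*} (Z : ℕ → Set V) (n : ℕ) :
    interSeq Z n ⊆ Z n := by
  cases n with
  | zero => exact subset_rfl
  | succ n => exact Set.inter_subset_right

lemma subset_unionSeq {V : Type*} (Z : ℕ → Set V) (n : ℕ) :
    Z n ⊆ unionSeq Z n := by
  cases n with
  | zero => exact subset_rfl
  | succ n => exact Set.subset_union_right

lemma interSeq_antitone {V : Type*} (Z : ℕ → Set V) : Antitone (interSeq Z) :=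
  antitone_nat_of_succ_le fun n => Set.inter_subset_left

lemma unionSeq_monotone {V : Type*} (Z : ℕ → Set V) : Monotone (unionSeq Z) :=
  monotone_nat_of_le_succ fun n => Set.subset_union_left

/-- The intersection and the union of any nonempty family of optimal `u-v` cuts is
again an optimal `u-v` cut. -/
theorem sInter_sUnion_optimal {V : Type*} [Countable V] [Nonempty V]
    (b : Set V → ℝ≥0∞)
    (h0 : ∀ X : Set V, b X = 0 ↔ X = ∅ ∨ X = Set.univ)
    (h1 : ∀ X : Set V, b Xᶜ = b X)
    (h2 : ∀ X Y : Set V, b (X ∩ Y) + b (X ∪ Y) ≤ b X + b Y)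
    (h3m : ∀ X : ℕ → Set V, Monotone X →
      b (⋃ n, X n) ≤ Filter.liminf (fun n => b (X n)) Filter.atTop)
    (h3a : ∀ X : ℕ → Set V, Antitone X →
      b (⋂ n, X n) ≤ Filter.liminf (fun n => b (X n)) Filter.atTop)
    (h4 : ∀ u v : V, u ≠ v → lamB b u v < ⊤)
    (u v : V) (huv : u ≠ v) (F : Set (Set V)) (hne : F.Nonempty)
    (hopt : ∀ X ∈ F, IsOptCut b u v X) :
    IsOptCut b u v (⋂₀ F) ∧ IsOptCut b u v (⋃₀ F) := by
  classical
  obtain ⟨X₀, hX₀⟩ := hne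
  obtain ⟨f, hf⟩ := exists_surjective_nat V
  set L := lamB b u v with hLdef
  have hlam : L ≠ ⊤ := (h4 u v huv).ne
  -- cut properties of the sInter and sUnion
  have hIu : u ∈ ⋂₀ F := fun X hX => (hopt X hX).1
  have hIv : v ∉ ⋂₀ F := fun h => (hopt X₀ hX₀).2.1 (h X₀ hX₀)
  have hUu : u ∈ ⋃₀ F := ⟨X₀, hX₀, (hopt X₀ hX₀).1⟩
  have hUv : v ∉ ⋃₀ F := fun ⟨X, hXF, hv⟩ => (hopt X hXF).2.1 hv
  constructor
  · -- intersection
    have hZ : ∀ n, ∃ X, X ∈ F ∧ (f n ∉ ⋂₀ F → f n ∉ X) := by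
      intro n
      by_cases h : f n ∈ ⋂₀ F
      · exact ⟨X₀, hX₀, fun h' => absurd h h'⟩
      · rw [Set.mem_sInter] at h
        push_neg at h
        obtain ⟨X, hXF, hfX⟩ := h
        exact ⟨X, hXF, fun _ => hfX⟩
    choose Z hZF hZn using hZ
    have hoptY : ∀ n, IsOptCut b u v (interSeq Z n) := by
      intro n
      induction n with
      | zero => exact hopt _ (hZF 0)
      | succ n ih => exact (optPair h2 hlam ih (hopt _ (hZF (n + 1)))).1
    have hsub : ∀ n, ⋂₀ F ⊆ interSeq Z n := by
      intro n
      induction n with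
      | zero => exact Set.sInter_subset_of_mem (hZF 0)
      | succ n ih =>
        exact Set.subset_inter ih (Set.sInter_subset_of_mem (hZF (n + 1)))
    have heq : (⋂ n, interSeq Z n) = ⋂₀ F := by
      apply Set.Subset.antisymm
      · intro w hw
        by_contra hwF
        obtain ⟨k, hk⟩ := hf w
        have h1' : w ∉ Z k := hk ▸ hZn k (hk ▸ hwF)
        exact h1' (interSeq_subset Z k (Set.mem_iInter.mp hw k))
      · exact Set.subset_iInter hsub
    have hle : b (⋂₀ F) ≤ L := by
      rw [← heq]
      refine (h3a _ (interSeq_antitone Z)).trans ?_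
      have : (fun n => b (interSeq Z n)) = fun _ => L :=
        funext fun n => (hoptY n).2.2
      rw [this, Filter.liminf_const]
    exact ⟨hIu, hIv, le_antisymm hle (lamB_le' b ⟨hIu, hIv⟩)⟩
  · -- union
    have hZ : ∀ n, ∃ X, X ∈ F ∧ (f n ∈ ⋃₀ F → f n ∈ X) := by
      intro n
      by_cases h : f n ∈ ⋃₀ F
      · obtain ⟨X, hXF, hfX⟩ := h
        exact ⟨X, hXF, fun _ => hfX⟩
      · exact ⟨X₀, hX₀, fun h' => absurd h' h⟩
    choose Z hZF hZn using hZ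
    have hoptY : ∀ n, IsOptCut b u v (unionSeq Z n) := by
      intro n
      induction n with
      | zero => exact hopt _ (hZF 0)
      | succ n ih => exact (optPair h2 hlam ih (hopt _ (hZF (n + 1)))).2
    have hsub : ∀ n, unionSeq Z n ⊆ ⋃₀ F := by
      intro n
      induction n with
      | zero => exact fun w hw => ⟨Z 0, hZF 0, hw⟩
      | succ n ih =>
        exact Set.union_subset ih fun w hw => ⟨Z (n + 1), hZF (n + 1), hw⟩
    have heq : (⋃ n, unionSeq Z n) = ⋃₀ F := by
      apply Set.Subset.antisymm
      · exact Set.iUnion_subset hsub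
      · intro w hw
        obtain ⟨k, hk⟩ := hf w
        have h1' : w ∈ Z k := hk ▸ hZn k (hk ▸ hw)
        exact Set.mem_iUnion.mpr ⟨k, subset_unionSeq Z k h1'⟩
    have hle : b (⋃₀ F) ≤ L := by
      rw [← heq]
      refine (h3m _ (unionSeq_monotone Z)).trans ?_
      have : (fun n => b (unionSeq Z n)) = fun _ => L :=
        funext fun n => (hoptY n).2.2
      rw [this, Filter.liminf_const]
    exact ⟨hUu, hUv, le_antisymm hle (lamB_le' b ⟨hUu, hUv⟩)⟩
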